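/- Let (X,d) be a metric space, scl a scaling, and E ⊆ X. Then sup{α > 0 : P_0^{scl_α}(E) = +∞} = upper-scl_B E = inf{α > 0 : P_0^{scl_α}(E) = 0} (with sup ∅ = 0 and inf ∅ = +∞), where P_0^φ denotes the packing pre-measure. -/

import Mathlib

open Filter MeasureTheory Metric Set
open scoped ENNReal Topology NNReal

noncomputable section

/-- A *scaling* is a family `(s α)_{α>0}` of positive non-decreasing functions on `(0,1)`
such that for all `α > β > 0` there is `λ₀ > 1` with, for every `λ ∈ (1, λ₀)`,
`s α ε / s β (ε^λ) → 0` and `s α ε / (s β ε)^λ → 0` as `ε → 0⁺`. -/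
def IsScaling (s : ℝ → ℝ → ℝ) : Prop :=
  (∀ α : ℝ, 0 < α → ∀ ε ∈ Set.Ioo (0:ℝ) 1, 0 < s α ε) ∧
  (∀ α : ℝ, 0 < α → MonotoneOn (s α) (Set.Ioo (0:ℝ) 1)) ∧
  (∀ α β : ℝ, 0 < β → β < α → ∃ l₀ > (1:ℝ), ∀ l ∈ Set.Ioo (1:ℝ) l₀,
    Tendsto (fun ε : ℝ => s α ε / s β (ε ^ l)) (𝓝[>] (0:ℝ)) (𝓝 0) ∧
    Tendsto (fun ε : ℝ => s α ε / (s β ε) ^ l) (𝓝[>] (0:ℝ)) (𝓝 0))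

/-- The covering number `N_ε(E)`: minimal cardinality of a finite cover of `E` by balls of
radius `ε` centered in `E` (`+∞` if there is no such finite cover). -/
def coveringNumber {X : Type*} [MetricSpace X] (E : Set X) (ε : ℝ) : ℝ≥0∞ :=
  ⨅ (t : Finset X) (_ : (↑t : Set X) ⊆ E ∧ E ⊆ ⋃ x ∈ t, ball x ε), (t.card : ℝ≥0∞)

/-- Lower box scale of a set. -/
def lowerBoxScale {X : Type*} [MetricSpace X] (s : ℝ → ℝ → ℝ) (E : Set X) : ℝ≥0∞ :=
  ⨆ (α : ℝ) (_ : 0 < α ∧ Tendsto (fun ε : ℝ => coveringNumber E ε * ENNReal.ofReal (s α ε))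
      (𝓝[>] (0:ℝ)) (𝓝 (⊤ : ℝ≥0∞))), ENNReal.ofReal α

/-- Upper box scale of a set. -/
def upperBoxScale {X : Type*} [MetricSpace X] (s : ℝ → ℝ → ℝ) (E : Set X) : ℝ≥0∞ :=
  ⨅ (α : ℝ) (_ : 0 < α ∧ Tendsto (fun ε : ℝ => coveringNumber E ε * ENNReal.ofReal (s α ε))
      (𝓝[>] (0:ℝ)) (𝓝 (0 : ℝ≥0∞))), ENNReal.ofReal α

/-- `H_ε^φ(E)`: Hausdorff pre-measure at scale `ε`, via countable covers by balls of radii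
at most `ε`. -/
def hausdorffPre {X : Type*} [MetricSpace X] (φ : ℝ → ℝ) (E : Set X) (ε : ℝ) : ℝ≥0∞ :=
  ⨅ (c : ℕ → X) (r : ℕ → ℝ) (t : Set ℕ)
    (_ : (∀ n ∈ t, r n ∈ Set.Ioc (0:ℝ) ε) ∧ E ⊆ ⋃ n ∈ t, ball (c n) (r n)),
    ∑' n : t, ENNReal.ofReal (φ (r n))

/-- `H^φ(E) = lim_{ε→0} H_ε^φ(E)`. -/
def hausdorffMeasureOf {X : Type*} [MetricSpace X] (φ : ℝ → ℝ) (E : Set X) : ℝ≥0∞ :=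
  ⨆ (ε : ℝ) (_ : 0 < ε), hausdorffPre φ E ε

/-- Hausdorff scale of a set. -/
def hausdorffScale {X : Type*} [MetricSpace X] (s : ℝ → ℝ → ℝ) (E : Set X) : ℝ≥0∞ :=
  ⨆ (α : ℝ) (_ : 0 < α ∧ hausdorffMeasureOf (s α) E = ⊤), ENNReal.ofReal α

/-- Packing scale of a set, via countable covers and upper box scales. -/
def packingScale {X : Type*} [MetricSpace X] (s : ℝ → ℝ → ℝ) (A : Set X) : ℝ≥0∞ :=
  ⨅ (E : ℕ → Set X) (_ : (⋃ n, E n) = A), ⨆ n, upperBoxScale s (E n)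

/-- Lower local scale of a measure at a point. -/
def lowerLocalScale {X : Type*} [MetricSpace X] [MeasurableSpace X]
    (s : ℝ → ℝ → ℝ) (μ : Measure X) (x : X) : ℝ≥0∞ :=
  ⨆ (α : ℝ) (_ : 0 < α ∧ Tendsto (fun ε : ℝ => μ (ball x ε) / ENNReal.ofReal (s α ε))
      (𝓝[>] (0:ℝ)) (𝓝 (0 : ℝ≥0∞))), ENNReal.ofReal α

/-- Upper local scale of a measure at a point. -/
def upperLocalScale {X : Type*} [MetricSpace X] [MeasurableSpace X]
    (s : ℝ → ℝ → ℝ) (μ : Measure X) (x : X) : ℝ≥0∞ :=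
  ⨅ (α : ℝ) (_ : 0 < α ∧ Tendsto (fun ε : ℝ => μ (ball x ε) / ENNReal.ofReal (s α ε))
      (𝓝[>] (0:ℝ)) (𝓝 (⊤ : ℝ≥0∞))), ENNReal.ofReal α

/-- Scale of a measure: infimum of the scale over Borel sets of positive measure. -/
def measureScale {X : Type*} [MetricSpace X] [MeasurableSpace X]
    (sc : Set X → ℝ≥0∞) (μ : Measure X) : ℝ≥0∞ :=
  ⨅ (E : Set X) (_ : MeasurableSet E ∧ 0 < μ E), sc E

/-- `*`-scale of a measure: infimum of the scale over Borel sets of full measure. -/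
def measureScaleStar {X : Type*} [MetricSpace X] [MeasurableSpace X]
    (sc : Set X → ℝ≥0∞) (μ : Measure X) : ℝ≥0∞ :=
  ⨅ (E : Set X) (_ : MeasurableSet E ∧ μ Eᶜ = 0), sc E

/-- Quantization number `Q_μ(ε)`. -/
def quantizationNumber {X : Type*} [MetricSpace X] [MeasurableSpace X]
    (μ : Measure X) (ε : ℝ) : ℝ≥0∞ :=
  ⨅ (t : Finset X) (_ : ∫⁻ x, (⨅ c ∈ t, edist x c) ∂μ ≤ ENNReal.ofReal ε), (t.card : ℝ≥0∞)

/-- Lower quantization scale of a measure. -/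
def lowerQuantScale {X : Type*} [MetricSpace X] [MeasurableSpace X]
    (s : ℝ → ℝ → ℝ) (μ : Measure X) : ℝ≥0∞ :=
  ⨆ (α : ℝ) (_ : 0 < α ∧ Tendsto (fun ε : ℝ => quantizationNumber μ ε * ENNReal.ofReal (s α ε))
      (𝓝[>] (0:ℝ)) (𝓝 (⊤ : ℝ≥0∞))), ENNReal.ofReal α

/-- Upper quantization scale of a measure. -/
def upperQuantScale {X : Type*} [MetricSpace X] [MeasurableSpace X]
    (s : ℝ → ℝ → ℝ) (μ : Measure X) : ℝ≥0∞ :=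
  ⨅ (α : ℝ) (_ : 0 < α ∧ Tendsto (fun ε : ℝ => quantizationNumber μ ε * ENNReal.ofReal (s α ε))
      (𝓝[>] (0:ℝ)) (𝓝 (0 : ℝ≥0∞))), ENNReal.ofReal α

/-- Packing number `Ñ_ε(E)`: maximal cardinality of an `ε`-separated subset of `E`. -/
def packingNumber {X : Type*} [MetricSpace X] (E : Set X) (ε : ℝ) : ℝ≥0∞ :=
  ⨆ (t : Finset X) (_ : (↑t : Set X) ⊆ E ∧ ∀ x ∈ t, ∀ y ∈ t, x ≠ y → ε ≤ dist x y),
    (t.card : ℝ≥0∞)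

/-- `P_ε^φ(E)`: supremum of `Σ φ(r_i)` over `ε`-packs of `E` (pairwise disjoint balls of `E`,
centered in `E`, with radii at most `ε`). -/
def packingPre {X : Type*} [MetricSpace X] (φ : ℝ → ℝ) (E : Set X) (ε : ℝ) : ℝ≥0∞ :=
  ⨆ (t : Finset (X × ℝ)) (_ : (∀ p ∈ t, p.1 ∈ E ∧ p.2 ∈ Set.Ioc (0:ℝ) ε) ∧
      (↑t : Set (X × ℝ)).Pairwise fun p q => Disjoint (ball p.1 p.2 ∩ E) (ball q.1 q.2 ∩ E)),
    ∑ p ∈ t, ENNReal.ofReal (φ p.2)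

/-- The packing pre-measure `P_0^φ(E) = lim_{ε→0} P_ε^φ(E)`. -/
def packingPre0 {X : Type*} [MetricSpace X] (φ : ℝ → ℝ) (E : Set X) : ℝ≥0∞ :=
  ⨅ (ε : ℝ) (_ : 0 < ε), packingPre φ E ε

/-- The packing `φ`-measure `P^φ(E)`. -/
def packingMeasureOf {X : Type*} [MetricSpace X] (φ : ℝ → ℝ) (E : Set X) : ℝ≥0∞ :=
  ⨅ (F : ℕ → Set X) (_ : (⋃ n, F n) = E), ∑' n, packingPre0 φ (F n)


/-!
For `α` above the upper box scale, take `γ < α` with `N_ε(E) s_γ(ε) → 0`. In a pack, the centres of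
the `m` balls of radius at least `r` are `r`-separated, so `m ≤ N_{r/2}(E)`; the scaling axioms
give `s_α(r) ≤ s_γ(r/2)^l ≤ (δ/m)^l` for some `l > 1`, and ranking the balls by radius bounds
every pack by `δ^l ∑ m^{-l}`, which tends to `0` with `δ`.

For `α` below it, take `α' > α` with `N_η(E) s_{α'}(η) > b > 0` for arbitrarily small `η`. A
maximal `η`-separated set has at least `N_η(E)` points, and the balls of radius `η/2` about them
form a pack of value at least `N_η(E) s_α(η/2) ≥ N_η(E) s_{α'}(η) / c` for any `c > 0`, hence
`P_0^{s_α}(E) = ∞`.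
-/

lemma ENNReal.eq_top_of_forall_pos_le_ofReal_mul {b x : ℝ≥0∞} (hb : b ≠ 0)
    (h : ∀ c : ℝ, 0 < c → b ≤ ENNReal.ofReal c * x) : x = ⊤ := by
  by_contra hx
  have hlim : Tendsto (fun c : ℝ => ENNReal.ofReal c * x) (𝓝[>] 0) (𝓝 0) := by
    simpa using ENNReal.Tendsto.mul_const (ENNReal.tendsto_ofReal
      (tendsto_id.mono_left (nhdsWithin_le_nhds (a := (0:ℝ))))) (Or.inr hx)
  exact hb (nonpos_iff_eq_zero.1 (ge_of_tendsto hlim (eventually_mem_nhdsWithin.mono h)))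

lemma iSup_pos_ofReal_eq_of_threshold {p : ℝ → Prop} {U : ℝ≥0∞}
    (below : ∀ α, 0 < α → ENNReal.ofReal α < U → p α)
    (above : ∀ α, 0 < α → U < ENNReal.ofReal α → ¬ p α) :
    ⨆ (α : ℝ) (_ : 0 < α ∧ p α), ENNReal.ofReal α = U := by
  refine le_antisymm (iSup₂_le fun α ⟨hα, hp⟩ => not_lt.1 fun hU => above α hα hU hp)
    (le_of_forall_lt fun c hc => ?_)
  obtain ⟨x, -, hcx, hxU⟩ := ENNReal.lt_iff_exists_real_btwn.1 hc
  have hx : 0 < x := ENNReal.ofReal_pos.1 (zero_le.trans_lt hcx)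
  exact hcx.trans_le (le_iSup₂ (f := fun (α : ℝ) (_ : 0 < α ∧ p α) => ENNReal.ofReal α) x
    ⟨hx, below x hx hxU⟩)

lemma iInf_pos_ofReal_eq_of_threshold {p : ℝ → Prop} {U : ℝ≥0∞}
    (below : ∀ α, 0 < α → ENNReal.ofReal α < U → ¬ p α)
    (above : ∀ α, 0 < α → U < ENNReal.ofReal α → p α) :
    ⨅ (α : ℝ) (_ : 0 < α ∧ p α), ENNReal.ofReal α = U := by
  refine le_antisymm (le_of_forall_gt fun c hc => ?_)
    (le_iInf₂ fun α ⟨hα, hp⟩ => not_lt.1 fun hU => below α hα hU hp)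
  obtain ⟨x, -, hUx, hxc⟩ := ENNReal.lt_iff_exists_real_btwn.1 hc
  have hx : 0 < x := ENNReal.ofReal_pos.1 (zero_le.trans_lt hUx)
  exact (iInf₂_le (f := fun (α : ℝ) (_ : 0 < α ∧ p α) => ENNReal.ofReal α) x
    ⟨hx, above x hx hUx⟩).trans_lt hxc

lemma Finset.sum_rank_le_sum_range {ι α : Type*} [LinearOrder α] (t : Finset ι) (w : ι → α)
    (g : ℕ → ℝ≥0∞) (hg : AntitoneOn g (Set.Ici 1)) :
    ∑ p ∈ t, g (t.filter fun q => w p ≤ w q).card ≤ ∑ k ∈ Finset.range t.card, g (k + 1) := by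
  classical
  induction t using Finset.induction_on_min_value w with
  | empty => simp
  | insert a s has hmin ih =>
    have hfilter_a : ((insert a s).filter fun q => w a ≤ w q) = insert a s :=
      Finset.filter_true_of_mem fun q hq => (Finset.mem_insert.1 hq).elim (fun h => h ▸ le_rfl)
        (hmin q)
    have hfilter_s : ∀ p ∈ s, g ((insert a s).filter fun q => w p ≤ w q).card ≤
        g (s.filter fun q => w p ≤ w q).card := fun p hp => by
      have hpos : 0 < (s.filter fun q => w p ≤ w q).card :=
        Finset.card_pos.2 ⟨p, Finset.mem_filter.2 ⟨hp, le_rfl⟩⟩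
      have hsub : (s.filter fun q => w p ≤ w q).card ≤
          ((insert a s).filter fun q => w p ≤ w q).card :=
        Finset.card_le_card (Finset.filter_subset_filter _ (Finset.subset_insert a s))
      exact hg hpos (hpos.trans_le hsub) hsub
    rw [Finset.sum_insert has, hfilter_a, Finset.card_insert_of_notMem has, Finset.sum_range_succ,
      add_comm]
    gcongr
    exact (Finset.sum_le_sum hfilter_s).trans ih

section Packing

variable {X : Type*} [MetricSpace X]

def IsPack (E : Set X) (ε : ℝ) (t : Finset (X × ℝ)) : Prop :=
  (∀ p ∈ t, p.1 ∈ E ∧ p.2 ∈ Set.Ioc (0:ℝ) ε) ∧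
    (↑t : Set (X × ℝ)).Pairwise fun p q => Disjoint (ball p.1 p.2 ∩ E) (ball q.1 q.2 ∩ E)

lemma card_le_packingNumber {E : Set X} {η : ℝ} {S : Finset X} (hSE : (↑S : Set X) ⊆ E)
    (hS : ∀ x ∈ S, ∀ y ∈ S, x ≠ y → η ≤ dist x y) : (S.card : ℝ≥0∞) ≤ packingNumber E η :=
  le_iSup₂ (f := fun (S : Finset X)
    (_ : (↑S : Set X) ⊆ E ∧ ∀ x ∈ S, ∀ y ∈ S, x ≠ y → η ≤ dist x y) => (S.card : ℝ≥0∞)) S ⟨hSE, hS⟩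

lemma packingNumber_le_coveringNumber_half (E : Set X) (η : ℝ) :
    packingNumber E η ≤ coveringNumber E (η / 2) := by
  refine iSup₂_le fun S ⟨hSE, hS⟩ => le_iInf₂ fun u ⟨_, hu⟩ => ?_
  have hcenter : ∀ x ∈ S, ∃ c ∈ u, x ∈ ball c (η / 2) := fun x hx => by
    simpa using hu (hSE hx)
  choose! f hfu hf using hcenter
  have hinj : Set.InjOn f ↑S := fun x hx y hy hxy => by
    by_contra hne
    have h1 := mem_ball.1 (hf x hx)
    have h2 := mem_ball.1 (hf y hy)
    rw [hxy] at h1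
    linarith [hS x hx y hy hne, dist_triangle_right x y (f y)]
  exact_mod_cast Finset.card_le_card_of_injOn f hfu hinj

lemma coveringNumber_le_packingNumber (E : Set X) {η : ℝ} (hη : 0 < η) :
    coveringNumber E η ≤ packingNumber E η := by
  classical
  by_contra! hlt
  have hgrow : ∀ S : Finset X, (↑S : Set X) ⊆ E → (∀ x ∈ S, ∀ y ∈ S, x ≠ y → η ≤ dist x y) →
      ∃ y ∈ E, ∀ x ∈ S, η ≤ dist y x := by
    intro S hSE hS
    by_contra! hcov
    have hN : coveringNumber E η ≤ S.card := iInf₂_le S ⟨hSE, fun y hy => by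
      obtain ⟨x, hx, hxy⟩ := hcov y hy
      exact mem_iUnion₂.2 ⟨x, hx, hxy⟩⟩
    exact (hlt.trans_le hN).not_ge (card_le_packingNumber hSE hS)
  have hlarge : ∀ k : ℕ, ∃ S : Finset X, (↑S : Set X) ⊆ E ∧
      (∀ x ∈ S, ∀ y ∈ S, x ≠ y → η ≤ dist x y) ∧ S.card = k := by
    intro k
    induction k with
    | zero => exact ⟨∅, by simp⟩
    | succ k ih =>
      obtain ⟨S, hSE, hS, rfl⟩ := ih
      obtain ⟨y, hyE, hy⟩ := hgrow S hSE hS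
      have hyS : y ∉ S := fun h => by simpa using (hy y h).trans_lt' hη
      refine ⟨insert y S, ?_, ?_, Finset.card_insert_of_notMem hyS⟩
      · rw [Finset.coe_insert]
        exact Set.insert_subset hyE hSE
      · simp only [Finset.mem_insert]
        rintro a (rfl | ha) b (rfl | hb) hab
        · exact absurd rfl hab
        · exact hy b hb
        · exact dist_comm a b ▸ hy a ha
        · exact hS a ha b hb hab
  have htop : packingNumber E η = ⊤ := ENNReal.eq_top_of_forall_nnreal_le fun r => by
    obtain ⟨k, hk⟩ := exists_nat_gt r
    obtain ⟨S, hSE, hS, rfl⟩ := hlarge k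
    exact (ENNReal.coe_le_coe.2 (by exact_mod_cast hk.le)).trans (card_le_packingNumber hSE hS)
  exact hlt.not_ge (htop ▸ le_top)

lemma IsPack.sum_le_packingPre {E : Set X} {ε : ℝ} {t : Finset (X × ℝ)} (ht : IsPack E ε t)
    (φ : ℝ → ℝ) : ∑ p ∈ t, ENNReal.ofReal (φ p.2) ≤ packingPre φ E ε :=
  le_iSup₂ (f := fun (t : Finset (X × ℝ)) (_ : IsPack E ε t) => ∑ p ∈ t, ENNReal.ofReal (φ p.2))
    t ht

lemma IsPack.le_dist {E : Set X} {ε : ℝ} {t : Finset (X × ℝ)} (ht : IsPack E ε t) {p q : X × ℝ}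
    (hp : p ∈ t) (hq : q ∈ t) (hpq : p ≠ q) : p.2 ≤ dist p.1 q.1 := by
  by_contra! h
  obtain ⟨hqE, hq0, -⟩ := ht.1 q hq
  exact Set.disjoint_left.1 (ht.2 hp hq hpq) ⟨mem_ball'.2 h, hqE⟩ ⟨mem_ball_self hq0, hqE⟩

lemma IsPack.card_filter_le_packingNumber {E : Set X} {ε : ℝ} {t : Finset (X × ℝ)}
    (ht : IsPack E ε t) (r : ℝ) :
    ((t.filter fun q => r ≤ q.2).card : ℝ≥0∞) ≤ packingNumber E r := by
  classical
  set T := t.filter fun q => r ≤ q.2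
  have hsep : ∀ p ∈ T, ∀ q ∈ T, p ≠ q → r ≤ dist p.1 q.1 := fun p hp q hq hpq =>
    (Finset.mem_filter.1 hp).2.trans
      (ht.le_dist (Finset.mem_filter.1 hp).1 (Finset.mem_filter.1 hq).1 hpq)
  have hinj : Set.InjOn Prod.fst (↑T : Set (X × ℝ)) := fun p hp q hq hpq => by
    by_contra hne
    have hp' := (Finset.mem_filter.1 hp).1
    have := ht.le_dist hp' (Finset.mem_filter.1 hq).1 hne
    rw [hpq, dist_self] at this
    exact (ht.1 p hp').2.1.not_ge this
  rw [← Finset.card_image_of_injOn hinj]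
  refine card_le_packingNumber ?_ ?_
  · simp only [Finset.coe_image, Set.image_subset_iff]
    exact fun p hp => (ht.1 p (Finset.mem_filter.1 hp).1).1
  · simp only [Finset.mem_image]
    rintro _ ⟨p, hp, rfl⟩ _ ⟨q, hq, rfl⟩ hne
    exact hsep p hp q hq fun h => hne (h ▸ rfl)

lemma packingNumber_mul_le_packingPre (φ : ℝ → ℝ) (E : Set X) {η ε : ℝ} (hη : 0 < η)
    (hηε : η / 2 ≤ ε) : packingNumber E η * ENNReal.ofReal (φ (η / 2)) ≤ packingPre φ E ε := by
  simp_rw [_root_.packingNumber, ENNReal.iSup_mul]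
  refine iSup₂_le fun S ⟨hSE, hS⟩ => ?_
  set t := S.map (Function.Embedding.sectL X (η / 2))
  have ht : IsPack E ε t := by
    constructor
    · simp only [t, Finset.mem_map, Function.Embedding.sectL_apply]
      rintro _ ⟨x, hx, rfl⟩
      exact ⟨hSE hx, half_pos hη, hηε⟩
    · simp only [t, Finset.coe_map, Function.Embedding.sectL_apply]
      rintro _ ⟨x, hx, rfl⟩ _ ⟨y, hy, rfl⟩ hne
      have hxy : η ≤ dist x y := hS x hx y hy fun h => hne (h ▸ rfl)
      exact (ball_disjoint_ball (by linarith)).mono inter_subset_left inter_subset_left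
  calc (S.card : ℝ≥0∞) * ENNReal.ofReal (φ (η / 2)) = ∑ p ∈ t, ENNReal.ofReal (φ p.2) := by
        simp [t]
    _ ≤ packingPre φ E ε := ht.sum_le_packingPre φ

lemma packingPre_le_tsum {φ : ℝ → ℝ} {E : Set X} {ε : ℝ} (g : ℕ → ℝ≥0∞)
    (hg : AntitoneOn g (Set.Ici 1))
    (hφ : ∀ r ∈ Set.Ioc (0:ℝ) ε, ∀ m : ℕ, 1 ≤ m → (m : ℝ≥0∞) ≤ packingNumber E r →
      ENNReal.ofReal (φ r) ≤ g m) :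
    packingPre φ E ε ≤ ∑' k, g (k + 1) := by
  refine iSup₂_le fun t (ht : IsPack E ε t) => ?_
  calc ∑ p ∈ t, ENNReal.ofReal (φ p.2)
      ≤ ∑ p ∈ t, g (t.filter fun q => p.2 ≤ q.2).card :=
        Finset.sum_le_sum fun p hp => hφ p.2 (ht.1 p hp).2 _
          (Finset.card_pos.2 ⟨p, Finset.mem_filter.2 ⟨hp, le_rfl⟩⟩)
          (ht.card_filter_le_packingNumber p.2)
    _ ≤ ∑ k ∈ Finset.range t.card, g (k + 1) := t.sum_rank_le_sum_range Prod.snd g hg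
    _ ≤ ∑' k, g (k + 1) := ENNReal.sum_le_tsum _

end Packing

lemma eventually_rpow_le_half {l : ℝ} (hl : 1 < l) : ∀ᶠ ε in 𝓝[>] (0:ℝ), ε ^ l ≤ ε / 2 := by
  have hlim : Tendsto (fun ε : ℝ => ε ^ (l - 1)) (𝓝[>] 0) (𝓝 0) := by
    have := (Real.continuousAt_rpow_const 0 (l - 1) (Or.inr (by linarith))).tendsto
    rw [Real.zero_rpow (by linarith)] at this
    exact this.mono_left nhdsWithin_le_nhds
  filter_upwards [hlim.eventually (ge_mem_nhds (by norm_num : (0:ℝ) < 1 / 2)),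
    self_mem_nhdsWithin] with ε hε (hε0 : 0 < ε)
  calc ε ^ l = ε * ε ^ (l - 1) := by
        conv_lhs => rw [show l = 1 + (l - 1) by ring, Real.rpow_add hε0, Real.rpow_one]
    _ ≤ ε * (1 / 2) := mul_le_mul_of_nonneg_left hε hε0.le
    _ = ε / 2 := by ring

namespace IsScaling

variable {s : ℝ → ℝ → ℝ}

lemma eventually_le_mul_half (hs : IsScaling s) {α β c : ℝ} (hβ : 0 < β) (hβα : β < α)
    (hc : 0 < c) : ∀ᶠ ε in 𝓝[>] (0:ℝ), s α ε ≤ c * s β (ε / 2) := by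
  obtain ⟨l₀, hl₀, hlim⟩ := hs.2.2 α β hβ hβα
  obtain ⟨l, hl⟩ := nonempty_Ioo.2 hl₀
  filter_upwards [(hlim l hl).1.eventually (gt_mem_nhds hc), eventually_rpow_le_half hl.1,
    Ioo_mem_nhdsGT one_pos] with ε hratio hpow ⟨hε0, hε1⟩
  have hεl : ε ^ l ∈ Ioo (0:ℝ) 1 := ⟨Real.rpow_pos_of_pos hε0 l, by linarith⟩
  have hpos : 0 < s β (ε ^ l) := hs.1 β hβ _ hεl
  calc s α ε ≤ c * s β (ε ^ l) := ((div_lt_iff₀ hpos).1 hratio).le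
    _ ≤ c * s β (ε / 2) :=
      mul_le_mul_of_nonneg_left (hs.2.1 β hβ hεl ⟨by linarith, by linarith⟩ hpow) hc.le

lemma exists_eventually_le_rpow_half (hs : IsScaling s) {α γ : ℝ} (hγ : 0 < γ) (hγα : γ < α) :
    ∃ l : ℝ, 1 < l ∧ ∀ᶠ ε in 𝓝[>] (0:ℝ), s α ε ≤ s γ (ε / 2) ^ l := by
  obtain ⟨β, hγβ, hβα⟩ := exists_between hγα
  have hβ : 0 < β := hγ.trans hγβ
  obtain ⟨l₀, hl₀, hlim⟩ := hs.2.2 α β hβ hβα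
  obtain ⟨l, hl⟩ := nonempty_Ioo.2 hl₀
  refine ⟨l, hl.1, ?_⟩
  filter_upwards [(hlim l hl).2.eventually (gt_mem_nhds one_pos),
    hs.eventually_le_mul_half hγ hγβ one_pos, Ioo_mem_nhdsGT one_pos]
    with ε hratio hβγ ⟨hε0, hε1⟩
  have hβpos : 0 < s β ε := hs.1 β hβ ε ⟨hε0, hε1⟩
  calc s α ε ≤ s β ε ^ l := ((div_lt_one (Real.rpow_pos_of_pos hβpos l)).1 hratio).le
    _ ≤ s γ (ε / 2) ^ l :=
      Real.rpow_le_rpow hβpos.le (by simpa using hβγ) (zero_le_one.trans hl.1.le)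

end IsScaling

section BoxScale

variable {X : Type*} [MetricSpace X] {s : ℝ → ℝ → ℝ}

lemma packingPre0_le_rpow_mul_tsum (hs : IsScaling s) (E : Set X) {α γ l δ : ℝ} (hγ : 0 < γ)
    (hl : 0 < l) (hδ : 0 < δ)
    (hN : Tendsto (fun ε => coveringNumber E ε * ENNReal.ofReal (s γ ε)) (𝓝[>] 0) (𝓝 0))
    (hαγ : ∀ᶠ ε in 𝓝[>] (0:ℝ), s α ε ≤ s γ (ε / 2) ^ l) :
    packingPre0 (s α) E ≤
      ENNReal.ofReal (δ ^ l) * ∑' k : ℕ, ENNReal.ofReal ((((k + 1 : ℕ) : ℝ) ^ l)⁻¹) := by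
  have hhalf : Tendsto (fun r : ℝ => r / 2) (𝓝[>] 0) (𝓝[>] 0) :=
    tendsto_nhdsWithin_of_tendsto_nhds_of_eventually_within _
      (by simpa using ((continuous_id.div_const (2:ℝ)).tendsto 0).mono_left nhdsWithin_le_nhds)
      (eventually_mem_nhdsWithin.mono fun r (hr : 0 < r) => half_pos hr)
  obtain ⟨ε, hε, hsub⟩ := mem_nhdsGT_iff_exists_Ioc_subset.1
    ((ENNReal.tendsto_nhds_zero.1 (hN.comp hhalf) _ (ENNReal.ofReal_pos.2 hδ)).and
      (hαγ.and (Ioo_mem_nhdsGT one_pos)))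
  set g : ℕ → ℝ≥0∞ := fun m => ENNReal.ofReal (δ ^ l) * ENNReal.ofReal (((m : ℝ) ^ l)⁻¹)
  have hg : AntitoneOn g (Set.Ici 1) := fun a (ha : 1 ≤ a) b _ hab => by
    simp only [g]
    gcongr
  have hφ : ∀ r ∈ Set.Ioc (0:ℝ) ε, ∀ m : ℕ, 1 ≤ m → (m : ℝ≥0∞) ≤ packingNumber E r →
      ENNReal.ofReal (s α r) ≤ g m := by
    intro r hr m hm hmr
    obtain ⟨hcov, hpow, hr0, hr1⟩ := hsub hr
    have hm0 : (0 : ℝ) < m := Nat.cast_pos.2 hm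
    have hγpos : 0 < s γ (r / 2) := hs.1 γ hγ _ ⟨by linarith, by linarith⟩
    have hcount : (m : ℝ) * s γ (r / 2) ≤ δ := by
      have := (mul_le_mul_left (hmr.trans (packingNumber_le_coveringNumber_half E r)) _).trans
        hcov
      rwa [← ENNReal.ofReal_natCast, ← ENNReal.ofReal_mul hm0.le,
        ENNReal.ofReal_le_ofReal_iff hδ.le] at this
    simp only [g]
    rw [← ENNReal.ofReal_mul (by positivity)]
    refine ENNReal.ofReal_le_ofReal ?_
    calc s α r ≤ s γ (r / 2) ^ l := hpow
      _ ≤ (δ / m) ^ l := Real.rpow_le_rpow hγpos.le ((le_div_iff₀ hm0).2 (by linarith)) hl.le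
      _ = δ ^ l * ((m : ℝ) ^ l)⁻¹ := by rw [Real.div_rpow hδ.le hm0.le, div_eq_mul_inv]
  calc packingPre0 (s α) E ≤ packingPre (s α) E ε := iInf₂_le ε hε
    _ ≤ ∑' k, g (k + 1) := packingPre_le_tsum g hg hφ
    _ = _ := ENNReal.tsum_mul_left

lemma packingPre0_eq_zero_of_upperBoxScale_lt (hs : IsScaling s) (E : Set X) {α : ℝ}
    (h : upperBoxScale s E < ENNReal.ofReal α) : packingPre0 (s α) E = 0 := by
  obtain ⟨γ, ⟨hγ, hN⟩, hγα⟩ := by simpa only [upperBoxScale, iInf_lt_iff] using h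
  obtain ⟨l, hl, hαγ⟩ :=
    hs.exists_eventually_le_rpow_half hγ (ENNReal.ofReal_lt_ofReal_iff'.1 hγα).1
  have hC : ∑' k : ℕ, ENNReal.ofReal ((((k + 1 : ℕ) : ℝ) ^ l)⁻¹) ≠ ⊤ := by
    rw [← ENNReal.ofReal_tsum_of_nonneg (fun k => by positivity)
      ((summable_nat_add_iff 1).2 (Real.summable_nat_rpow_inv.2 hl))]
    exact ENNReal.ofReal_ne_top
  have hpow : Tendsto (fun δ : ℝ => δ ^ l) (𝓝 0) (𝓝 0) := by
    simpa [Real.zero_rpow (by linarith : l ≠ 0)] using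
      (Real.continuousAt_rpow_const 0 l (Or.inr (by linarith))).tendsto
  have hlim := ENNReal.Tendsto.mul_const
    (ENNReal.tendsto_ofReal (hpow.mono_left (nhdsWithin_le_nhds (s := Ioi 0)))) (Or.inr hC)
  rw [ENNReal.ofReal_zero, zero_mul] at hlim
  exact nonpos_iff_eq_zero.1 (ge_of_tendsto hlim (eventually_mem_nhdsWithin.mono fun δ hδ =>
    packingPre0_le_rpow_mul_tsum hs E hγ (by linarith) hδ hN hαγ))

lemma packingPre0_eq_top_of_lt_upperBoxScale (hs : IsScaling s) (E : Set X) {α : ℝ}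
    (hα : 0 < α) (h : ENNReal.ofReal α < upperBoxScale s E) : packingPre0 (s α) E = ⊤ := by
  obtain ⟨α', -, hαα', hα'U⟩ := ENNReal.lt_iff_exists_real_btwn.1 h
  have hα' : α < α' := (ENNReal.ofReal_lt_ofReal_iff'.1 hαα').1
  have hnot : ¬ Tendsto (fun ε => coveringNumber E ε * ENNReal.ofReal (s α' ε))
      (𝓝[>] 0) (𝓝 0) :=
    fun hN => hα'U.not_ge (iInf₂_le α' ⟨hα.trans hα', hN⟩)
  obtain ⟨b, hb, hfreq⟩ : ∃ b > 0, ∃ᶠ η in 𝓝[>] (0:ℝ),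
      b < coveringNumber E η * ENNReal.ofReal (s α' η) := by
    simpa [ENNReal.tendsto_nhds_zero, Filter.not_eventually] using hnot
  simp only [packingPre0, iInf_eq_top]
  intro ε hε
  refine ENNReal.eq_top_of_forall_pos_le_ofReal_mul hb.ne' fun c hc => ?_
  obtain ⟨η, hbη, hsη, hη0, hηε⟩ := (hfreq.and_eventually
    ((hs.eventually_le_mul_half hα hα' hc).and (Ioo_mem_nhdsGT hε))).exists
  calc b ≤ coveringNumber E η * ENNReal.ofReal (s α' η) := hbη.le
    _ ≤ packingNumber E η * ENNReal.ofReal (c * s α (η / 2)) := by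
        gcongr
        exact coveringNumber_le_packingNumber E hη0
    _ = ENNReal.ofReal c * (packingNumber E η * ENNReal.ofReal (s α (η / 2))) := by
        rw [ENNReal.ofReal_mul hc.le]
        ring
    _ ≤ ENNReal.ofReal c * packingPre (s α) E ε := by
        gcongr
        exact packingNumber_mul_le_packingPre _ E hη0 (by linarith)

end BoxScale

/-- Characterization of the upper box scale via the packing pre-measure:
`sup {α > 0 : P₀^{scl_α}(E) = ∞} = upper-scl_B E = inf {α > 0 : P₀^{scl_α}(E) = 0}`. -/
theorem upperBoxScale_eq_packingPre0_char
    {X : Type*} [MetricSpace X] (s : ℝ → ℝ → ℝ) (hs : IsScaling s) (E : Set X) :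
    (⨆ (α : ℝ) (_ : 0 < α ∧ packingPre0 (s α) E = ⊤), ENNReal.ofReal α) =
      upperBoxScale s E ∧
    upperBoxScale s E =
      (⨅ (α : ℝ) (_ : 0 < α ∧ packingPre0 (s α) E = 0), ENNReal.ofReal α) := by
  have zero_of_gt : ∀ α, 0 < α → upperBoxScale s E < ENNReal.ofReal α →
      packingPre0 (s α) E = 0 :=
    fun _ _ h => packingPre0_eq_zero_of_upperBoxScale_lt hs E h
  have top_of_lt : ∀ α, 0 < α → ENNReal.ofReal α < upperBoxScale s E →
      packingPre0 (s α) E = ⊤ :=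
    fun _ hα h => packingPre0_eq_top_of_lt_upperBoxScale hs E hα h
  refine ⟨iSup_pos_ofReal_eq_of_threshold top_of_lt fun α hα h hP => ?_,
    (iInf_pos_ofReal_eq_of_threshold (fun α hα h hP => ?_) zero_of_gt).symm⟩
  · exact ENNReal.zero_ne_top ((zero_of_gt α hα h).symm.trans hP)
  · exact ENNReal.top_ne_zero ((top_of_lt α hα h).symm.trans hP)
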